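/- arXiv:1202.2293 — 2 statements merged into one kernel-verified Lean document; each statement's English description precedes it below -/
import Mathlib

section
/- For the m×k grid graph G (Cartesian product of paths P_m and P_k), the minimum membership dimension of a good system of categories equals diam(G) = (m−1) + (k−1). -/
/-!
Lower bound: in a good system every `s ≠ t` has a neighbour strictly closer to `t` in `catDist`,
so descending from `s` reaches `t` along a walk of length at most `catDist S s t ≤ memdim S`;
hence `memdim S` is at least the diameter, which for the grid is `(m - 1) + (k - 1)` since the
coordinate sum changes by one along each edge.

Upper bound: the prefixes and suffixes of a path `P_n` form a good system in which every vertex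
lies in exactly `n - 1` categories, and for good systems of `G` and `H` the categories `C × V(H)`
and `V(G) × D` form a good system of `G □ H` whose `catDist` is the sum of the two coordinate
distances and whose membership dimension is at most the sum of the two.
-/

open Finset SimpleGraph

variable {V : Type*}

def catDist [DecidableEq V] (S : Finset (Finset V)) (s t : V) : ℕ :=
  (S.filter fun C => t ∈ C ∧ s ∉ C).card

def IsGoodSystem [DecidableEq V] (G : SimpleGraph V) (S : Finset (Finset V)) : Prop :=
  (∀ C ∈ S, (G.induce (C : Set V)).Connected) ∧
    ∀ s t : V, s ≠ t → ∃ u, G.Adj s u ∧ catDist S u t < catDist S s t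

def memdim [DecidableEq V] [Fintype V] (S : Finset (Finset V)) : ℕ :=
  univ.sup fun v : V => (S.filter fun C => v ∈ C).card

noncomputable def graphDiam [Fintype V] (G : SimpleGraph V) : ℕ :=
  univ.sup fun p : V × V => G.dist p.1 p.2

noncomputable def minMemdim (V : Type*) [DecidableEq V] [Fintype V] (G : SimpleGraph V) : ℕ :=
  sInf {m | ∃ S : Finset (Finset V), IsGoodSystem G S ∧ memdim S = m}

namespace SimpleGraph

theorem exists_walk_length_le_of_descent (G : SimpleGraph V) {t : V} (φ : V → ℕ)
    (h : ∀ v, v ≠ t → ∃ u, G.Adj v u ∧ φ u < φ v) (v : V) :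
    ∃ w : G.Walk v t, w.length ≤ φ v := by
  induction hv : φ v using Nat.strong_induction_on generalizing v with
  | _ n ih =>
    by_cases hvt : v = t
    · subst hvt
      exact ⟨.nil, Nat.zero_le _⟩
    · obtain ⟨u, hvu, hlt⟩ := h v hvt
      obtain ⟨w, hw⟩ := ih (φ u) (hv ▸ hlt) u rfl
      exact ⟨.cons hvu w, by simp only [Walk.length_cons]; omega⟩

theorem induce_connected_of_descent (G : SimpleGraph V) {s : Set V} {t : V} (ht : t ∈ s)
    (φ : V → ℕ) (h : ∀ v ∈ s, v ≠ t → ∃ u ∈ s, G.Adj v u ∧ φ u < φ v) :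
    (G.induce s).Connected := by
  refine (connected_iff_exists_forall_reachable _).mpr ⟨⟨t, ht⟩, fun v => ?_⟩
  have hdesc : ∀ v : s, v ≠ ⟨t, ht⟩ → ∃ u, (G.induce s).Adj v u ∧ φ u < φ v := by
    rintro ⟨v, hv⟩ hvt
    obtain ⟨u, hu, hvu, hlt⟩ := h v hv (fun h => hvt (Subtype.ext h))
    exact ⟨⟨u, hu⟩, hvu, hlt⟩
  exact (G.induce s).exists_walk_length_le_of_descent (φ ∘ Subtype.val) hdesc v
    |>.elim fun w _ => w.reachable.symm

theorem abs_sub_le_length_of_lipschitz {G : SimpleGraph V} (f : V → ℤ)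
    (hf : ∀ a b, G.Adj a b → |f a - f b| ≤ 1) {u v : V} (w : G.Walk u v) :
    |f u - f v| ≤ w.length := by
  induction w with
  | nil => simp
  | @cons a b c hab w ih =>
    calc |f a - f c| ≤ |f a - f b| + |f b - f c| := abs_sub_le _ _ _
      _ ≤ 1 + w.length := add_le_add (hf a b hab) ih
      _ = (Walk.cons hab w).length := by push_cast [Walk.length_cons]; ring

theorem Reachable.abs_sub_le_dist_of_lipschitz {G : SimpleGraph V} (f : V → ℤ)
    (hf : ∀ a b, G.Adj a b → |f a - f b| ≤ 1) {u v : V} (huv : G.Reachable u v) :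
    |f u - f v| ≤ G.dist u v := by
  obtain ⟨w, hw⟩ := huv.exists_walk_length_eq_dist
  exact hw ▸ abs_sub_le_length_of_lipschitz f hf w

end SimpleGraph

namespace IsGoodSystem

variable [DecidableEq V] {G : SimpleGraph V} {S : Finset (Finset V)}

theorem exists_walk_length_le_catDist (hS : IsGoodSystem G S) (s t : V) :
    ∃ w : G.Walk s t, w.length ≤ catDist S s t :=
  G.exists_walk_length_le_of_descent (catDist S · t) (fun v hv => hS.2 v t hv) s

theorem preconnected (hS : IsGoodSystem G S) : G.Preconnected := fun s t =>
  (hS.exists_walk_length_le_catDist s t).elim fun w _ => w.reachable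

theorem dist_le_catDist (hS : IsGoodSystem G S) (s t : V) : G.dist s t ≤ catDist S s t :=
  (hS.exists_walk_length_le_catDist s t).elim fun w hw => (dist_le w).trans hw

end IsGoodSystem

theorem catDist_le_memdim [DecidableEq V] [Fintype V] (S : Finset (Finset V)) (s t : V) :
    catDist S s t ≤ memdim S :=
  (card_le_card (monotone_filter_right S fun _ _ h => h.1)).trans
    (le_sup (f := fun v => (S.filter fun C => v ∈ C).card) (mem_univ t))

theorem IsGoodSystem.graphDiam_le_memdim [DecidableEq V] [Fintype V] {G : SimpleGraph V}
    {S : Finset (Finset V)} (hS : IsGoodSystem G S) : graphDiam G ≤ memdim S :=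
  Finset.sup_le fun p _ => (hS.dist_le_catDist p.1 p.2).trans (catDist_le_memdim S p.1 p.2)

section minMemdim

variable [DecidableEq V] [Fintype V] {G : SimpleGraph V}

theorem minMemdim_le {S : Finset (Finset V)} (hS : IsGoodSystem G S) :
    minMemdim V G ≤ memdim S :=
  Nat.sInf_le ⟨S, hS, rfl⟩

theorem graphDiam_le_minMemdim (h : ∃ S : Finset (Finset V), IsGoodSystem G S) :
    graphDiam G ≤ minMemdim V G := by
  obtain ⟨S, hS⟩ := h
  refine le_csInf ⟨_, S, hS, rfl⟩ ?_
  rintro _ ⟨S', hS', rfl⟩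
  exact hS'.graphDiam_le_memdim

end minMemdim

section CrossProduct

variable {α β : Type*}

theorem SimpleGraph.Connected.induce_prod {G : SimpleGraph α} {H : SimpleGraph β} {s : Set α}
    {t : Set β} (hs : (G.induce s).Connected) (ht : (H.induce t).Connected) :
    ((G □ H).induce (s ×ˢ t)).Connected := by
  have : Nonempty ↥(s ×ˢ t) :=
    ((Set.nonempty_coe_sort.mp hs.nonempty).prod (Set.nonempty_coe_sort.mp ht.nonempty)).to_subtype
  refine ⟨fun ⟨⟨a, b⟩, ha, hb⟩ ⟨⟨c, d⟩, hc, hd⟩ => ?_⟩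
  let vertical : H.induce t →g (G □ H).induce (s ×ˢ t) :=
    ⟨fun y => ⟨(a, y), ha, y.2⟩, fun h => Or.inr ⟨h, rfl⟩⟩
  let horizontal : G.induce s →g (G □ H).induce (s ×ˢ t) :=
    ⟨fun x => ⟨(x, d), x.2, hd⟩, fun h => Or.inl ⟨h, rfl⟩⟩
  exact ((ht ⟨b, hb⟩ ⟨d, hd⟩).map vertical).trans ((hs ⟨a, ha⟩ ⟨c, hc⟩).map horizontal)

variable [DecidableEq α] [DecidableEq β] [Fintype α] [Fintype β]

def crossProdSystem (SG : Finset (Finset α)) (SH : Finset (Finset β)) :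
    Finset (Finset (α × β)) :=
  SG.image (· ×ˢ univ) ∪ SH.image (univ ×ˢ ·)

variable {SG : Finset (Finset α)} {SH : Finset (Finset β)}

theorem catDist_crossProdSystem (s t : α × β) :
    catDist (crossProdSystem SG SH) s t = catDist SG s.1 t.1 + catDist SH s.2 t.2 := by
  have hinjG : Set.InjOn (· ×ˢ (univ : Finset β)) (SG : Set (Finset α)) := fun C _ C' _ h => by
    ext x
    simpa using congrArg ((x, s.2) ∈ ·) h
  have hinjH : Set.InjOn ((univ : Finset α) ×ˢ ·) (SH : Set (Finset β)) := fun D _ D' _ h => by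
    ext y
    simpa using congrArg ((s.1, y) ∈ ·) h
  have hdisj : Disjoint ((SG.image (· ×ˢ univ)).filter fun C => t ∈ C ∧ s ∉ C)
      ((SH.image (univ ×ˢ ·)).filter fun C => t ∈ C ∧ s ∉ C) := by
    simp only [Finset.disjoint_left, mem_filter, mem_image]
    rintro _ ⟨⟨C, -, rfl⟩, -, hsC⟩ ⟨⟨D, -, hDC⟩, htC, -⟩
    rw [← hDC, mem_product] at htC
    have h := congrArg ((s.1, t.2) ∈ ·) hDC
    simp only [mem_product, mem_univ, true_and, and_true, eq_iff_iff] at h hsC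
    exact hsC (h.mp htC.2)
  rw [catDist, crossProdSystem, filter_union, card_union_of_disjoint hdisj, filter_image,
    filter_image, card_image_of_injOn (hinjG.mono (filter_subset _ _)),
    card_image_of_injOn (hinjH.mono (filter_subset _ _))]
  simp [catDist]

theorem IsGoodSystem.crossProdSystem [Nonempty α] [Nonempty β] {G : SimpleGraph α}
    {H : SimpleGraph β} (hG : IsGoodSystem G SG) (hH : IsGoodSystem H SH) :
    IsGoodSystem (G □ H) (crossProdSystem SG SH) := by
  have hGconn : (G.induce Set.univ).Connected :=
    G.induceUnivIso.connected_iff.mpr ⟨hG.preconnected⟩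
  have hHconn : (H.induce Set.univ).Connected :=
    H.induceUnivIso.connected_iff.mpr ⟨hH.preconnected⟩
  refine ⟨?_, fun s t hst => ?_⟩
  · simp only [_root_.crossProdSystem, mem_union, mem_image]
    rintro _ (⟨C, hC, rfl⟩ | ⟨D, hD, rfl⟩) <;> rw [coe_product, coe_univ]
    · exact (hG.1 C hC).induce_prod hHconn
    · exact hGconn.induce_prod (hH.1 D hD)
  simp only [catDist_crossProdSystem]
  by_cases h₁ : s.1 = t.1
  · obtain ⟨u, hsu, hlt⟩ := hH.2 s.2 t.2 fun h₂ => hst (Prod.ext h₁ h₂)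
    exact ⟨(s.1, u), Or.inr ⟨hsu, rfl⟩, by simpa using hlt⟩
  · obtain ⟨u, hsu, hlt⟩ := hG.2 s.1 t.1 h₁
    exact ⟨(u, s.2), Or.inl ⟨hsu, rfl⟩, by simpa using hlt⟩

theorem memdim_crossProdSystem_le : memdim (crossProdSystem SG SH) ≤ memdim SG + memdim SH := by
  refine Finset.sup_le fun v _ => ?_
  rw [crossProdSystem, filter_union, filter_image, filter_image]
  calc _ ≤ ((SG.filter fun C => v ∈ C ×ˢ univ).image (· ×ˢ univ)).card +
        ((SH.filter fun D => v ∈ univ ×ˢ D).image (univ ×ˢ ·)).card := card_union_le _ _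
    _ ≤ (SG.filter fun C => v.1 ∈ C).card + (SH.filter fun D => v.2 ∈ D).card := by
        gcongr <;> refine card_image_le.trans_eq ?_ <;> simp
    _ ≤ memdim SG + memdim SH :=
        add_le_add (le_sup (f := fun x => (SG.filter fun C => x ∈ C).card) (mem_univ v.1))
          (le_sup (f := fun y => (SH.filter fun D => y ∈ D).card) (mem_univ v.2))

end CrossProduct

theorem catDist_lt_catDist [DecidableEq V] {S : Finset (Finset V)} {s t u : V}
    (hconvex : ∀ C ∈ S, s ∈ C → t ∈ C → u ∈ C) (hsep : ∃ C ∈ S, t ∈ C ∧ u ∈ C ∧ s ∉ C) :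
    catDist S u t < catDist S s t := by
  obtain ⟨C, hC, htC, huC, hsC⟩ := hsep
  refine card_lt_card ((ssubset_iff_of_subset ?_).mpr ⟨C, ?_, ?_⟩)
  · exact monotone_filter_right S fun C hC h => ⟨h.1, fun hsC => h.2 (hconvex C hC hsC h.1)⟩
  · exact mem_filter.mpr ⟨hC, htC, hsC⟩
  · simp [huC]

namespace SimpleGraph

theorem pathGraph_induce_lt_connected {n i : ℕ} (hi : 0 < i) (hin : i ≤ n) :
    ((pathGraph n).induce {x : Fin n | x.val < i}).Connected := by
  refine induce_connected_of_descent _ (t := ⟨0, by omega⟩) hi Fin.val fun v hv hv0 => ?_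
  have hv0 : v.val ≠ 0 := fun h => hv0 (Fin.ext h)
  refine ⟨⟨v.val - 1, by omega⟩, by simp only [Set.mem_ofPred_eq] at hv ⊢; omega, ?_, ?_⟩
  · exact pathGraph_adj.mpr (Or.inr (by simp only; omega))
  · simp only; omega

theorem pathGraph_induce_ge_connected {n i : ℕ} (hin : i < n) :
    ((pathGraph n).induce {x : Fin n | i ≤ x.val}).Connected := by
  refine induce_connected_of_descent _ (t := ⟨n - 1, by omega⟩)
    (by simp only [Set.mem_ofPred_eq]; omega) (fun x => n - 1 - x.val) fun v hv hvn => ?_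
  have hvn : v.val ≠ n - 1 := fun h => hvn (Fin.ext h)
  have := v.isLt
  refine ⟨⟨v.val + 1, by omega⟩, by simp only [Set.mem_ofPred_eq] at hv ⊢; omega, ?_, ?_⟩
  · exact pathGraph_adj.mpr (Or.inl rfl)
  · simp only; omega

end SimpleGraph

def pathSystem (n : ℕ) : Finset (Finset (Fin n)) :=
  (Ico 1 n).image (fun i => univ.filter fun x : Fin n => x.val < i) ∪
    (Ico 1 n).image (fun i => univ.filter fun x : Fin n => i ≤ x.val)

theorem memdim_pathSystem_le (n : ℕ) : memdim (pathSystem n) ≤ n - 1 := by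
  refine Finset.sup_le fun v _ => ?_
  rw [pathSystem, filter_union, filter_image, filter_image]
  calc _ ≤ _ := card_union_le _ _
    _ ≤ ((Ico 1 n).filter (v.val < ·)).card + ((Ico 1 n).filter (¬ v.val < ·)).card := by
        gcongr <;> refine card_image_le.trans_eq ?_ <;> simp
    _ = n - 1 := by rw [card_filter_add_card_filter_not, Nat.card_Ico]

theorem isGoodSystem_pathSystem (n : ℕ) : IsGoodSystem (pathGraph n) (pathSystem n) := by
  refine ⟨?_, fun s t hst => ?_⟩
  · simp only [pathSystem, mem_union, mem_image, mem_Ico]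
    rintro _ (⟨i, hi, rfl⟩ | ⟨i, hi, rfl⟩) <;> rw [coe_filter_univ]
    · exact pathGraph_induce_lt_connected (by omega) hi.2.le
    · exact pathGraph_induce_ge_connected hi.2
  have hprefix {i : ℕ} (hi : i ∈ Ico 1 n) : univ.filter (·.val < i) ∈ pathSystem n :=
    mem_union_left _ (mem_image_of_mem _ hi)
  have hsuffix {i : ℕ} (hi : i ∈ Ico 1 n) : univ.filter (i ≤ ·.val) ∈ pathSystem n :=
    mem_union_right _ (mem_image_of_mem _ hi)
  have hconvex {u : Fin n} (hsu : s.val ≤ u.val ∧ u.val ≤ t.val ∨ t.val ≤ u.val ∧ u.val ≤ s.val) :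
      ∀ C ∈ pathSystem n, s ∈ C → t ∈ C → u ∈ C := by
    simp only [pathSystem, mem_union, mem_image]
    rintro _ (⟨i, -, rfl⟩ | ⟨i, -, rfl⟩) <;> simp only [mem_filter, mem_univ, true_and] <;> omega
  rcases Fin.lt_or_lt_of_ne hst with hlt | hlt
  · refine ⟨⟨s.val + 1, by omega⟩, pathGraph_adj.mpr (Or.inl rfl), catDist_lt_catDist
      (hconvex (by simp only; omega)) ⟨_, hsuffix (i := s.val + 1) (by simp; omega), ?_⟩⟩
    simp only [mem_filter, mem_univ, true_and]
    omega
  · refine ⟨⟨s.val - 1, by omega⟩, pathGraph_adj.mpr (Or.inr (by simp only; omega)),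
      catDist_lt_catDist (hconvex (by simp only; omega))
        ⟨_, hprefix (i := s.val) (by simp; omega), ?_⟩⟩
    simp only [mem_filter, mem_univ, true_and]
    omega

theorem le_graphDiam_grid {m k : ℕ} (hm : 1 ≤ m) (hk : 1 ≤ k) :
    (m - 1) + (k - 1) ≤ graphDiam (pathGraph m □ pathGraph k) := by
  let first : Fin m × Fin k := (⟨0, hm⟩, ⟨0, hk⟩)
  let last : Fin m × Fin k := (⟨m - 1, by omega⟩, ⟨k - 1, by omega⟩)
  have hlip : ∀ a b, (pathGraph m □ pathGraph k).Adj a b →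
      |(a.1.val + a.2.val : ℤ) - (b.1.val + b.2.val)| ≤ 1 := by
    rintro a b (⟨hab, h⟩ | ⟨hab, h⟩) <;> rw [pathGraph_adj] at hab <;> rw [abs_le] <;> omega
  have hreach : (pathGraph m □ pathGraph k).Reachable last first :=
    reachable_boxProd.mpr ⟨pathGraph_preconnected m _ _, pathGraph_preconnected k _ _⟩
  calc (m - 1) + (k - 1) ≤ (pathGraph m □ pathGraph k).dist last first := by
        have := (le_abs_self _).trans (hreach.abs_sub_le_dist_of_lipschitz _ hlip)
        simp only [last, first] at this ⊢
        omega
    _ ≤ graphDiam (pathGraph m □ pathGraph k) :=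
        le_sup (f := fun p => (pathGraph m □ pathGraph k).dist p.1 p.2) (mem_univ (last, first))

theorem stmt4 (m k : ℕ) (hm : 1 ≤ m) (hk : 1 ≤ k) :
    minMemdim (Fin m × Fin k) (pathGraph m □ pathGraph k) = (m - 1) + (k - 1) := by
  have : NeZero m := ⟨by omega⟩
  have : NeZero k := ⟨by omega⟩
  have hgood := (isGoodSystem_pathSystem m).crossProdSystem (isGoodSystem_pathSystem k)
  refine le_antisymm ?_ ?_
  · calc _ ≤ memdim (crossProdSystem (pathSystem m) (pathSystem k)) := minMemdim_le hgood
      _ ≤ memdim (pathSystem m) + memdim (pathSystem k) := memdim_crossProdSystem_le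
      _ ≤ (m - 1) + (k - 1) := add_le_add (memdim_pathSystem_le m) (memdim_pathSystem_le k)
  · exact (le_graphDiam_grid hm hk).trans (graphDiam_le_minMemdim ⟨_, hgood⟩)
end

section
/- In any tree T with a good system of categories, every vertex v is contained in at least log₂(deg v) categories. -/
/-!
Let `u ≠ u'` be neighbours of `v`. Goodness gives a neighbour `w` of `u` and a category `C`
containing `u'` and `w` but not `u`. Categories are connected and `u` separates `u'` from every
neighbour of `u` other than `v`, so `w = v`: some category containing `v` contains `u'` but not
`u`. Hence the neighbours of `v` are told apart by the categories through `v`, and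
`deg v ≤ 2 ^ #{C : v ∈ C}`.
-/

open Finset SimpleGraph

variable {V : Type*}

namespace SimpleGraph

variable {G : SimpleGraph V}

lemma IsAcyclic.mem_support_of_adj_of_adj (hG : G.IsAcyclic) {u v w : V} (hv : G.Adj u v)
    (hw : G.Adj u w) (hvw : v ≠ w) (p : G.Walk v w) : u ∈ p.support := by
  have hbridge := isBridge_iff_forall_walk_mem_edges.mp
    (isAcyclic_iff_forall_adj_isBridge.mp hG hw) (.cons hv p)
  rw [Walk.edges_cons, List.mem_cons, Sym2.eq_iff] at hbridge
  obtain (⟨-, rfl⟩ | ⟨rfl, -⟩) | he := hbridge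
  · exact absurd rfl hvw
  · exact absurd rfl hv.ne
  · exact p.fst_mem_support_of_mem_edges he

lemma mem_of_induce_connected_of_forall_walk {C : Set V} (hC : (G.induce C).Connected)
    {x y z : V} (hx : x ∈ C) (hy : y ∈ C) (hsep : ∀ p : G.Walk x y, z ∈ p.support) : z ∈ C := by
  obtain ⟨q⟩ := hC ⟨x, hx⟩ ⟨y, hy⟩
  obtain ⟨a, -, rfl⟩ :=
    List.mem_map.mp <| Walk.support_map _ q ▸ hsep (q.map (Embedding.induce C).toHom)
  exact a.2

end SimpleGraph

section catDist

variable [DecidableEq V] {S : Finset (Finset V)} {s t w : V}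

lemma catDist_le_catDist (h : ∀ C ∈ S, t ∈ C → w ∈ C → s ∈ C) :
    catDist S s t ≤ catDist S w t :=
  card_le_card fun C hC => by
    simp only [mem_filter] at hC ⊢
    exact ⟨hC.1, hC.2.1, fun hw => hC.2.2 (h C hC.1 hC.2.1 hw)⟩

lemma exists_mem_of_catDist_lt (h : catDist S w t < catDist S s t) :
    ∃ C ∈ S, t ∈ C ∧ w ∈ C ∧ s ∉ C := by
  by_contra! hno
  exact h.not_ge (catDist_le_catDist fun C hC ht hw => hno C hC ht hw)

end catDist

lemma IsGoodSystem.exists_mem_notMem_of_adj [DecidableEq V] {G : SimpleGraph V}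
    {S : Finset (Finset V)} (hS : IsGoodSystem G S) (hG : G.IsAcyclic) {v u u' : V}
    (hu : G.Adj v u) (hu' : G.Adj v u') (hne : u ≠ u') :
    ∃ C ∈ S, v ∈ C ∧ u' ∈ C ∧ u ∉ C := by
  obtain ⟨w, huw, hlt⟩ := hS.2 u u' hne
  obtain ⟨C, hCS, hu'C, hwC, huC⟩ := exists_mem_of_catDist_lt hlt
  obtain rfl : w = v := by
    by_contra hwv
    have hsep (p : G.Walk u' w) : u ∈ p.support := by
      have h := hG.mem_support_of_adj_of_adj hu.symm huw (Ne.symm hwv) (.cons hu' p)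
      rw [Walk.support_cons, List.mem_cons] at h
      exact h.resolve_left hu.ne'
    exact huC (mem_of_induce_connected_of_forall_walk (hS.1 C hCS) hu'C hwC hsep)
  exact ⟨C, hCS, hwC, hu'C, huC⟩

lemma IsGoodSystem.degree_le_two_pow [Fintype V] [DecidableEq V] {G : SimpleGraph V}
    [DecidableRel G.Adj] {S : Finset (Finset V)} (hS : IsGoodSystem G S) (hG : G.IsAcyclic)
    (v : V) : G.degree v ≤ 2 ^ (S.filter fun C => v ∈ C).card := by
  set Sv := S.filter fun C => v ∈ C
  have hinj : Set.InjOn (fun u => Sv.filter (u ∈ ·)) (G.neighborFinset v) := by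
    intro u hu u' hu' (hcode : Sv.filter (u ∈ ·) = Sv.filter (u' ∈ ·))
    by_contra hne
    rw [coe_neighborFinset, mem_neighborSet] at hu hu'
    obtain ⟨C, hCS, hvC, hu'C, huC⟩ := hS.exists_mem_notMem_of_adj hG hu hu' hne
    have hC : C ∈ Sv.filter (u' ∈ ·) := by simp [Sv, hCS, hvC, hu'C]
    rw [← hcode, mem_filter] at hC
    exact huC hC.2
  have := card_le_card_of_injOn _ (fun u _ => mem_powerset.mpr (filter_subset _ Sv)) hinj
  rwa [card_powerset, card_neighborFinset_eq_degree] at this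

lemma Real.logb_two_le_of_le_two_pow {n k : ℕ} (h : n ≤ 2 ^ k) : Real.logb 2 n ≤ k := by
  rcases n.eq_zero_or_pos with rfl | hn
  · simp
  · rw [Real.logb_le_iff_le_rpow one_lt_two (by exact_mod_cast hn), Real.rpow_natCast]
    exact_mod_cast h

theorem stmt8 [Fintype V] [DecidableEq V] (G : SimpleGraph V) [DecidableRel G.Adj]
    (hT : G.IsTree) (S : Finset (Finset V)) (hS : IsGoodSystem G S) (v : V) :
    Real.logb 2 (G.degree v) ≤ (S.filter fun C => v ∈ C).card :=
  Real.logb_two_le_of_le_two_pow (hS.degree_le_two_pow hT.isAcyclic v)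
end
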